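/- The list L_n is exactly an enumeration (without repetition) of all words w_1 ... w_n with w_1 = 2 and 2 ≤ w_{j+1} ≤ w_j + 1 for all 1 ≤ j < n. -/

import Mathlib

/-!
Every shifted production `s(k, i)` with `2 ≤ i ≤ k + 1` is a rearrangement of `2, …, k + 1`, the
labels of the children of a node labelled `k` in the Catalan tree. Hence `L_{n+1}` is a permutation
of the list of all children of the words of `L_n`, and both claims follow by induction on `n`: the
children of distinct words are distinct, and the children of the words of length `n` are exactly the
words of length `n + 1`.
-/

def lastD (w : List Nat) : Nat := w.getLastD 0

/-- Shifted production for the Catalan rule: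
`sC k 2 = [2, k+1, k, ..., 3]` and, for `3 ≤ i ≤ k+1`,
`sC k i = [i, i+1, ..., k+1, 2, 3, ..., i-1]`. -/
def sC (k i : Nat) : List Nat :=
  if i = 2 then 2 :: (List.range (k - 1)).map (fun t => k + 1 - t)
  else (List.range (k + 2 - i)).map (fun t => i + t) ++
       (List.range (i - 2)).map (fun t => 2 + t)

/-- Builds the sublists `L_n^i` from the previous level, carrying the
starting digit of the next shifted production. -/
def graySubsAux : Nat → List (List Nat) → List (List (List Nat))
  | _, [] => []
  | j, w :: ws =>
    let sub := (sC (lastD w) j).map (fun d => w ++ [d])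
    sub :: graySubsAux (lastD (sub.getLastD [])) ws

def graySubs (prev : List (List Nat)) : List (List (List Nat)) :=
  graySubsAux 2 prev

/-- The Gray code list `L_n` for the Catalan succession rule. -/
def grayL : Nat → List (List Nat)
  | 0 => []
  | 1 => [[2]]
  | n + 2 => (graySubs (grayL (n + 1))).flatten

/-- `w` is a path from the root in the Catalan generating tree:
`w₁ = 2` and `2 ≤ w_{j+1} ≤ w_j + 1`. -/
def isTreeWord (w : List Nat) : Prop :=
  w.head? = some 2 ∧ ∀ j, j + 1 < w.length →
    2 ≤ w.getD (j + 1) 0 ∧ w.getD (j + 1) 0 ≤ w.getD j 0 + 1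

section ShiftedProduction

variable {k i : ℕ}

lemma mem_sC_iff (hi : 2 ≤ i) (hik : i ≤ k + 1) {d : ℕ} :
    d ∈ sC k i ↔ 2 ≤ d ∧ d ≤ k + 1 := by
  unfold sC
  split_ifs with h2
  · simp only [List.mem_cons, List.mem_map, List.mem_range]
    constructor
    · rintro (rfl | ⟨t, ht, rfl⟩) <;> omega
    · rintro ⟨hd2, hdk⟩
      by_cases hd : d = 2
      · exact Or.inl hd
      · exact Or.inr ⟨k + 1 - d, by omega, by omega⟩
  · simp only [List.mem_append, List.mem_map, List.mem_range]
    constructor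
    · rintro (⟨t, ht, rfl⟩ | ⟨t, ht, rfl⟩) <;> omega
    · rintro ⟨hd2, hdk⟩
      by_cases hd : i ≤ d
      · exact Or.inl ⟨d - i, by omega, by omega⟩
      · exact Or.inr ⟨d - 2, by omega, by omega⟩

lemma nodup_sC (hi : 2 ≤ i) : (sC k i).Nodup := by
  unfold sC
  split_ifs with h2
  · refine List.nodup_cons.2 ⟨?_, List.Nodup.map_on ?_ List.nodup_range⟩
    · simp only [List.mem_map, List.mem_range]
      omega
    · simp only [List.mem_range]
      omega
  · refine List.Nodup.append (List.nodup_range.map fun _ _ => by omega)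
      (List.nodup_range.map fun _ _ => by omega) ?_
    simp only [List.disjoint_left, List.mem_map, List.mem_range]
    omega

lemma sC_perm_range' (hi : 2 ≤ i) (hik : i ≤ k + 1) : (sC k i).Perm (List.range' 2 k) :=
  (List.perm_ext_iff_of_nodup (nodup_sC hi) List.nodup_range').2 fun d => by
    rw [mem_sC_iff hi hik, List.mem_range'_1]
    omega

lemma getLastD_sC_two (hk : 2 ≤ k) : (sC k 2).getLastD 0 = 3 := by
  obtain ⟨m, rfl⟩ : ∃ m, k = m + 2 := ⟨k - 2, by omega⟩
  simp only [sC, if_pos, show m + 2 - 1 = m + 1 by omega, List.range_succ, List.map_append,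
    List.map_singleton, ← List.cons_append, List.getLastD_concat]
  omega

lemma getLastD_sC_of_three_le (hi : 3 ≤ i) : (sC k i).getLastD 0 = i - 1 := by
  obtain ⟨m, rfl⟩ : ∃ m, i = m + 3 := ⟨i - 3, by omega⟩
  simp only [sC, if_neg (show m + 3 ≠ 2 by omega), show m + 3 - 2 = m + 1 by omega,
    List.range_succ, List.map_append, List.map_singleton, ← List.append_assoc, List.getLastD_concat]
  omega

end ShiftedProduction

def treeChildren (w : List ℕ) : List (List ℕ) :=
  (List.range' 2 (lastD w)).map (w ++ [·])

lemma lastD_append_singleton (w : List ℕ) (d : ℕ) : lastD (w ++ [d]) = d :=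
  List.getLastD_concat

lemma lastD_getLastD_map_append (w : List ℕ) {l : List ℕ} (hl : l ≠ []) :
    lastD ((l.map (w ++ [·])).getLastD []) = l.getLastD 0 := by
  obtain ⟨l, d, rfl⟩ := (List.eq_nil_or_concat' l).resolve_left hl
  simp only [List.map_append, List.map_singleton, List.getLastD_concat, lastD_append_singleton]

/- The carried digit stays in `{2, 3}`, because `s(k, 2)` ends in `3` and `s(k, 3)` ends in `2`;
so it never exceeds `k + 1` for the next node label `k ≥ 2`. -/
lemma flatten_graySubsAux_perm (ws : List (List ℕ)) (hws : ∀ w ∈ ws, 2 ≤ lastD w) {j : ℕ}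
    (hj : j = 2 ∨ j = 3) : (graySubsAux j ws).flatten.Perm (ws.flatMap treeChildren) := by
  induction ws generalizing j with
  | nil => simp [graySubsAux]
  | cons w ws ih =>
    have hw : 2 ≤ lastD w := hws w List.mem_cons_self
    have hj2 : 2 ≤ j := by omega
    have hjw : j ≤ lastD w + 1 := by omega
    have hnext : (sC (lastD w) j).getLastD 0 = 2 ∨ (sC (lastD w) j).getLastD 0 = 3 := by
      rcases hj with rfl | rfl
      · exact Or.inr (getLastD_sC_two hw)
      · exact Or.inl (getLastD_sC_of_three_le le_rfl)
    have hne : sC (lastD w) j ≠ [] :=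
      List.ne_nil_of_mem ((mem_sC_iff hj2 hjw).2 ⟨le_rfl, by omega⟩)
    rw [graySubsAux, List.flatten_cons, List.flatMap_cons, lastD_getLastD_map_append w hne]
    exact ((sC_perm_range' hj2 hjw).map _).append
      (ih (fun u hu => hws u (List.mem_cons_of_mem _ hu)) hnext)

lemma lastD_eq_getD (u : List ℕ) : lastD u = u.getD (u.length - 1) 0 := by
  rw [lastD, List.getLastD_eq_getLast?, List.getLast?_eq_getElem?, List.getD_eq_getElem?_getD]

lemma isTreeWord_append_singleton {u : List ℕ} (hu : u ≠ []) (d : ℕ) :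
    isTreeWord (u ++ [d]) ↔ isTreeWord u ∧ 2 ≤ d ∧ d ≤ lastD u + 1 := by
  have hlen : 0 < u.length := List.length_pos_iff.2 hu
  have hget : ∀ j < u.length, (u ++ [d]).getD j 0 = u.getD j 0 :=
    fun j hj => List.getD_append _ _ _ _ hj
  have hgetd : (u ++ [d]).getD u.length 0 = d := by simp
  simp only [isTreeWord, List.head?_append_of_ne_nil _ hu, List.length_append,
    List.length_singleton, lastD_eq_getD]
  constructor
  · rintro ⟨h2, hstep⟩
    refine ⟨⟨h2, fun j hj => ?_⟩, ?_⟩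
    · simpa only [hget _ hj, hget j (by omega)] using hstep j (by omega)
    · simpa only [Nat.sub_add_cancel hlen, hgetd, hget _ (by omega : u.length - 1 < u.length)]
        using hstep (u.length - 1) (by omega)
  · rintro ⟨⟨h2, hstep⟩, hd⟩
    refine ⟨h2, fun j hj => ?_⟩
    rcases (by omega : j + 1 < u.length ∨ j + 1 = u.length) with hj' | hj'
    · rw [hget _ hj', hget j (by omega)]
      exact hstep j hj'
    · rw [hj', hgetd, hget j (by omega), show j = u.length - 1 by omega]
      exact hd

lemma isTreeWord_singleton_iff (d : ℕ) : isTreeWord [d] ↔ d = 2 := by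
  simp [isTreeWord]

lemma two_le_lastD_of_isTreeWord {w : List ℕ} (hw : isTreeWord w) : 2 ≤ lastD w := by
  rcases List.eq_nil_or_concat' w with rfl | ⟨u, d, rfl⟩
  · simp [isTreeWord] at hw
  rcases eq_or_ne u [] with rfl | hu
  · simp [(isTreeWord_singleton_iff d).1 hw, lastD]
  · rw [lastD_append_singleton]
    exact ((isTreeWord_append_singleton hu d).1 hw).2.1

lemma nodup_flatMap_treeChildren {ws : List (List ℕ)} (hws : ws.Nodup) :
    (ws.flatMap treeChildren).Nodup := by
  refine List.nodup_flatMap.2 ⟨fun w _ => (List.nodup_range' (s := 2)).map fun _ _ => by simp, ?_⟩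
  refine hws.imp fun {v w} hvw => List.disjoint_left.2 ?_
  simp only [treeChildren, List.mem_map]
  rintro _ ⟨d, -, rfl⟩ ⟨e, -, he⟩
  exact hvw (List.append_inj' he rfl).1.symm

lemma mem_flatMap_treeChildren_iff {ws : List (List ℕ)} {n : ℕ}
    (hws : ∀ w, w ∈ ws ↔ w.length = n + 1 ∧ isTreeWord w) (v : List ℕ) :
    v ∈ ws.flatMap treeChildren ↔ v.length = n + 2 ∧ isTreeWord v := by
  simp only [List.mem_flatMap, treeChildren, List.mem_map, List.mem_range'_1]
  constructor
  · rintro ⟨u, hu, d, hd, rfl⟩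
    obtain ⟨hlen, htree⟩ := (hws u).1 hu
    have hne : u ≠ [] := List.ne_nil_of_length_eq_add_one hlen
    exact ⟨by simp [hlen], (isTreeWord_append_singleton hne d).2 ⟨htree, by omega⟩⟩
  · rintro ⟨hlen, htree⟩
    obtain ⟨u, d, rfl⟩ :=
      (List.eq_nil_or_concat' v).resolve_left (List.ne_nil_of_length_eq_add_one hlen)
    have hulen : u.length = n + 1 := by simpa using hlen
    obtain ⟨hu, hd⟩ :=
      (isTreeWord_append_singleton (List.ne_nil_of_length_eq_add_one hulen) d).1 htree
    exact ⟨u, (hws u).2 ⟨hulen, hu⟩, d, by omega, rfl⟩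

theorem stmt7_general (n : Nat) :
    (grayL n).Nodup ∧ ∀ w : List Nat, w ∈ grayL n ↔ (w.length = n ∧ isTreeWord w) := by
  induction n using Nat.twoStepInduction with
  | zero => simp [grayL, isTreeWord]
  | one =>
    refine ⟨List.nodup_singleton _, fun w => ?_⟩
    rw [grayL, List.mem_singleton, List.length_eq_one_iff]
    constructor
    · rintro rfl
      exact ⟨⟨2, rfl⟩, (isTreeWord_singleton_iff 2).2 rfl⟩
    · rintro ⟨⟨d, rfl⟩, hd⟩
      rw [(isTreeWord_singleton_iff d).1 hd]
  | more n _ ih =>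
    obtain ⟨hnodup, hmem⟩ := ih
    have hperm : (grayL (n + 2)).Perm ((grayL (n + 1)).flatMap treeChildren) :=
      flatten_graySubsAux_perm _ (fun w hw => two_le_lastD_of_isTreeWord ((hmem w).1 hw).2)
        (Or.inl rfl)
    exact ⟨hperm.nodup_iff.2 (nodup_flatMap_treeChildren hnodup),
      fun w => hperm.mem_iff.trans (mem_flatMap_treeChildren_iff hmem w)⟩

/-- `L_n` enumerates, without repetition, exactly the length-`n` paths of the
Catalan generating tree. -/
theorem stmt7 (n : Nat) (hn : 1 ≤ n) :
    (grayL n).Nodup ∧ ∀ w : List Nat, w ∈ grayL n ↔ (w.length = n ∧ isTreeWord w) :=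
  stmt7_general n
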